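/- arXiv:1606.04447 — 2 statements merged into one kernel-verified Lean document; each statement's English description precedes it below -/
import Mathlib

section
/- Let G be a finite simple graph that is vertex decomposable. Then for every vertex x of G, the graph G \ N[x] obtained by deleting the closed neighbourhood of x is vertex decomposable. Consequently, Shed(G) = {x ∈ V(G) : G \ x is vertex decomposable}. -/
open scoped Classical

variable {V : Type*}

/-- `S` is an independent set of the induced subgraph of `G` on the vertex set `A`. -/
def IsIndepIn (G : SimpleGraph V) (A S : Finset V) : Prop :=
  S ⊆ A ∧ ∀ u ∈ S, ∀ v ∈ S, ¬ G.Adj u v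

/-- `S` is a maximal independent set of the induced subgraph of `G` on the vertex set `A`. -/
def IsMaxIndepIn (G : SimpleGraph V) (A S : Finset V) : Prop :=
  IsIndepIn G A S ∧ ∀ T, IsIndepIn G A T → S ⊆ T → T = S

/-- The induced subgraph of `G` on the vertex set `A` is well-covered: all of its
maximal independent sets have the same cardinality. -/
def WellCoveredOn (G : SimpleGraph V) (A : Finset V) : Prop :=
  ∀ S T, IsMaxIndepIn G A S → IsMaxIndepIn G A T → S.card = T.card

/-- The closed neighbourhood of `x` deleted from `A`: the vertices of `A` distinct from `x`
and not adjacent to `x`. -/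
noncomputable def delClosedNbhd (G : SimpleGraph V) (A : Finset V) (x : V) : Finset V :=
  A.filter fun y => y ≠ x ∧ ¬ G.Adj x y

/-- The induced subgraph of `G` on the vertex set `A` is vertex decomposable: it is
well-covered, and either it has no edges, or some vertex `x ∈ A` is such that deleting `x`,
respectively the closed neighbourhood of `x`, leaves a vertex decomposable graph. -/
def VertexDecomposableOn (G : SimpleGraph V) (A : Finset V) : Prop :=
  WellCoveredOn G A ∧
    ((∀ u ∈ A, ∀ v ∈ A, ¬ G.Adj u v) ∨
      ∃ x, ∃ _h : x ∈ A,
        VertexDecomposableOn G (A.erase x) ∧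
        VertexDecomposableOn G (delClosedNbhd G A x))
termination_by A.card
decreasing_by
  · exact Finset.card_erase_lt_of_mem (by assumption)
  · exact Finset.card_lt_card
      (Finset.filter_ssubset.mpr ⟨x, by assumption, by simp⟩)

/-- A finite simple graph is well-covered if all of its maximal independent sets have the
same cardinality. -/
def WellCovered (G : SimpleGraph V) [Fintype V] : Prop :=
  WellCoveredOn G Finset.univ

/-- A finite simple graph is vertex decomposable. -/
def VertexDecomposable (G : SimpleGraph V) [Fintype V] : Prop :=
  VertexDecomposableOn G Finset.univ

/-- The set of shedding vertices of `G` : those vertices `x` such that both `G \ x` and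
`G \ N[x]` are vertex decomposable. -/
def Shed (G : SimpleGraph V) [Fintype V] : Set V :=
  {x | VertexDecomposableOn G (Finset.univ.erase x) ∧
       VertexDecomposableOn G (delClosedNbhd G Finset.univ x)}

/-- `D` is a dominating set of `G`: every vertex not in `D` is adjacent to a vertex of `D`. -/
def IsDominatingSet (G : SimpleGraph V) (D : Set V) : Prop :=
  ∀ v, v ∉ D → ∃ u ∈ D, G.Adj u v

/-- A vertex is simplicial if its neighbourhood induces a clique. -/
def IsSimplicialVertex (G : SimpleGraph V) (x : V) : Prop :=
  ∀ u v, G.Adj x u → G.Adj x v → u ≠ v → G.Adj u v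

/-!
Induction on the vertex set `A`. Adding `x` maps maximal independent sets of `A \ N[x]` to maximal
independent sets of `A`, so well-coveredness passes to `A \ N[x]`. If `A` has edges, pick a
shedding vertex `y` of `A`. For `y = x` there is nothing to prove; for `y ∼ x` we have
`A \ N[x] = (A \ y) \ N[x]`; otherwise `y` is a shedding vertex of `A \ N[x]`, because
`(A \ N[x]) \ y = (A \ y) \ N[x]` and `(A \ N[x]) \ N[y] = (A \ N[y]) \ N[x]`.
-/

section

variable {G : SimpleGraph V} {A S T : Finset V} {x y : V}

@[simp]
lemma mem_delClosedNbhd : y ∈ delClosedNbhd G A x ↔ y ∈ A ∧ y ≠ x ∧ ¬ G.Adj x y :=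
  Finset.mem_filter

lemma delClosedNbhd_subset : delClosedNbhd G A x ⊆ A :=
  Finset.filter_subset _ _

lemma delClosedNbhd_ssubset (hx : x ∈ A) : delClosedNbhd G A x ⊂ A :=
  Finset.filter_ssubset.mpr ⟨x, hx, by simp⟩

lemma delClosedNbhd_erase : delClosedNbhd G (A.erase y) x = (delClosedNbhd G A x).erase y := by
  ext z
  simp only [mem_delClosedNbhd, Finset.mem_erase]
  tauto

lemma delClosedNbhd_erase_of_adj (h : G.Adj x y) :
    delClosedNbhd G (A.erase y) x = delClosedNbhd G A x := by
  rw [delClosedNbhd_erase, Finset.erase_eq_of_notMem]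
  simp [h]

lemma delClosedNbhd_comm :
    delClosedNbhd G (delClosedNbhd G A y) x = delClosedNbhd G (delClosedNbhd G A x) y := by
  ext z
  simp only [mem_delClosedNbhd]
  tauto

lemma IsIndepIn.insert_of_delClosedNbhd (hx : x ∈ A) (hS : IsIndepIn G (delClosedNbhd G A x) S) :
    IsIndepIn G A (insert x S) := by
  obtain ⟨hSsub, hSind⟩ := hS
  refine ⟨Finset.insert_subset hx (hSsub.trans delClosedNbhd_subset), ?_⟩
  have hxS : ∀ v ∈ S, ¬ G.Adj x v := fun v hv => (mem_delClosedNbhd.mp (hSsub hv)).2.2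
  simp only [Finset.mem_insert]
  rintro u (rfl | hu) v (rfl | hv)
  · exact G.loopless.irrefl _
  · exact hxS v hv
  · exact fun h => hxS u hu h.symm
  · exact hSind u hu v hv

lemma IsIndepIn.erase_delClosedNbhd (hT : IsIndepIn G A T) (hxT : x ∈ T) :
    IsIndepIn G (delClosedNbhd G A x) (T.erase x) := by
  obtain ⟨hTsub, hTind⟩ := hT
  refine ⟨fun z hz => ?_, fun u hu v hv => hTind u (Finset.mem_of_mem_erase hu) v
    (Finset.mem_of_mem_erase hv)⟩
  obtain ⟨hzx, hzT⟩ := Finset.mem_erase.mp hz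
  exact mem_delClosedNbhd.mpr ⟨hTsub hzT, hzx, hTind x hxT z hzT⟩

lemma notMem_of_isIndepIn_delClosedNbhd (hS : IsIndepIn G (delClosedNbhd G A x) S) : x ∉ S :=
  fun hxS => (mem_delClosedNbhd.mp (hS.1 hxS)).2.1 rfl

lemma IsMaxIndepIn.insert_of_delClosedNbhd (hx : x ∈ A)
    (hS : IsMaxIndepIn G (delClosedNbhd G A x) S) : IsMaxIndepIn G A (insert x S) := by
  refine ⟨hS.1.insert_of_delClosedNbhd hx, fun T hT hST => ?_⟩
  have hxT : x ∈ T := hST (Finset.mem_insert_self x S)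
  have hS_le : S ⊆ T.erase x := fun z hz =>
    Finset.mem_erase.mpr ⟨fun hzx => notMem_of_isIndepIn_delClosedNbhd hS.1 (hzx ▸ hz),
      hST (Finset.mem_insert_of_mem hz)⟩
  rw [← hS.2 _ (hT.erase_delClosedNbhd hxT) hS_le, Finset.insert_erase hxT]

lemma WellCoveredOn.delClosedNbhd (h : WellCoveredOn G A) (hx : x ∈ A) :
    WellCoveredOn G (delClosedNbhd G A x) := by
  intro S T hS hT
  have := h _ _ (hS.insert_of_delClosedNbhd hx) (hT.insert_of_delClosedNbhd hx)
  rwa [Finset.card_insert_of_notMem (notMem_of_isIndepIn_delClosedNbhd hS.1),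
    Finset.card_insert_of_notMem (notMem_of_isIndepIn_delClosedNbhd hT.1),
    Nat.add_right_cancel_iff] at this

theorem VertexDecomposableOn.delClosedNbhd (hA : VertexDecomposableOn G A) (hx : x ∈ A) :
    VertexDecomposableOn G (delClosedNbhd G A x) := by
  induction A using Finset.strongInduction generalizing x with
  | _ A ih =>
  rw [VertexDecomposableOn] at hA
  obtain ⟨hwc, hedgeless | ⟨y, hy, hAy, hANy⟩⟩ := hA
  · rw [VertexDecomposableOn]
    exact ⟨hwc.delClosedNbhd hx, Or.inl fun u hu v hv =>
      hedgeless u (delClosedNbhd_subset hu) v (delClosedNbhd_subset hv)⟩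
  obtain rfl | hyx := eq_or_ne y x
  · exact hANy
  have hxAy : x ∈ A.erase y := Finset.mem_erase.mpr ⟨hyx.symm, hx⟩
  have hAy_x := ih _ (Finset.erase_ssubset hy) hAy hxAy
  by_cases hadj : G.Adj x y
  · rwa [delClosedNbhd_erase_of_adj hadj] at hAy_x
  have hyB : y ∈ delClosedNbhd G A x := mem_delClosedNbhd.mpr ⟨hy, hyx, hadj⟩
  have hxANy : x ∈ delClosedNbhd G A y :=
    mem_delClosedNbhd.mpr ⟨hx, hyx.symm, fun h => hadj h.symm⟩
  have hANy_x := ih _ (delClosedNbhd_ssubset hy) hANy hxANy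
  rw [delClosedNbhd_erase] at hAy_x
  rw [delClosedNbhd_comm] at hANy_x
  rw [VertexDecomposableOn]
  exact ⟨hwc.delClosedNbhd hx, Or.inr ⟨y, hyB, hAy_x, hANy_x⟩⟩

end

/-- If `G` is vertex decomposable, then `G \ N[x]` is vertex decomposable
for every vertex `x`; consequently `Shed(G)` is exactly the set of vertices `x` such that
`G \ x` is vertex decomposable. -/
theorem statement0 {V : Type*} [Fintype V] (G : SimpleGraph V)
    (hG : VertexDecomposable G) :
    (∀ x : V, VertexDecomposableOn G (delClosedNbhd G Finset.univ x)) ∧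
    Shed G = {x : V | VertexDecomposableOn G (Finset.univ.erase x)} := by
  have hdel : ∀ x : V, VertexDecomposableOn G (delClosedNbhd G Finset.univ x) :=
    fun x => VertexDecomposableOn.delClosedNbhd hG (Finset.mem_univ x)
  exact ⟨hdel, Set.ext fun x => ⟨And.left, fun h => ⟨h, hdel x⟩⟩⟩
end

section
/- Let G be a finite simple graph that is well-covered. If x is a simplicial vertex of G, then for every vertex y ∈ N(x), the graph G \ y obtained by deleting y is also well-covered. -/
open scoped Classical

variable {V : Type*}

/-!
Let `S` be a maximal independent set of `G \ y`, where `y` is a neighbour of the simplicial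
vertex `x`. Either `x ∈ S`, or `S` dominates `x` through some `s ≠ y`, and then `s ~ y` because
`N(x)` is a clique. In both cases `S` dominates `y` as well, so `S` is a maximal independent set
of `G`, and well-coveredness of `G` transfers to `G \ y`.
-/

theorem isMaxIndepIn_iff_forall_exists_adj {G : SimpleGraph V} {A S : Finset V} :
    IsMaxIndepIn G A S ↔ IsIndepIn G A S ∧ ∀ v ∈ A, v ∉ S → ∃ s ∈ S, G.Adj s v := by
  constructor
  · rintro ⟨hS, hmax⟩
    refine ⟨hS, fun v hvA hvS => ?_⟩
    by_contra! hnadj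
    have hindep : IsIndepIn G A (insert v S) := by
      refine ⟨Finset.insert_subset hvA hS.1, ?_⟩
      simp only [Finset.mem_insert]
      rintro u (rfl | hu) w (rfl | hw)
      · exact G.irrefl
      · exact fun h => hnadj w hw h.symm
      · exact hnadj u hu
      · exact hS.2 u hu w hw
    exact hvS (hmax _ hindep (Finset.subset_insert v S) ▸ Finset.mem_insert_self v S)
  · rintro ⟨hS, hdom⟩
    refine ⟨hS, fun T hT hST => Finset.Subset.antisymm ?_ hST⟩
    intro v hvT
    by_contra hvS
    obtain ⟨s, hsS, hsv⟩ := hdom v (hT.1 hvT) hvS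
    exact hT.2 s (hST hsS) v hvT hsv

theorem IsMaxIndepIn.of_erase {G : SimpleGraph V} {A S : Finset V} {y : V}
    (hS : IsMaxIndepIn G (A.erase y) S) (hy : ∃ s ∈ S, G.Adj s y) : IsMaxIndepIn G A S := by
  obtain ⟨⟨hSsub, hSind⟩, hdom⟩ := isMaxIndepIn_iff_forall_exists_adj.mp hS
  refine isMaxIndepIn_iff_forall_exists_adj.mpr
    ⟨⟨hSsub.trans (Finset.erase_subset y A), hSind⟩, fun v hvA hvS => ?_⟩
  by_cases hvy : v = y
  · exact hvy ▸ hy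
  · exact hdom v (Finset.mem_erase.mpr ⟨hvy, hvA⟩) hvS

theorem IsSimplicialVertex.exists_adj_of_isMaxIndepIn_erase {G : SimpleGraph V} {A S : Finset V}
    {x y : V} (hx : IsSimplicialVertex G x) (hxA : x ∈ A) (hxy : G.Adj x y)
    (hS : IsMaxIndepIn G (A.erase y) S) : ∃ s ∈ S, G.Adj s y := by
  by_cases hxS : x ∈ S
  · exact ⟨x, hxS, hxy⟩
  obtain ⟨hSindep, hdom⟩ := isMaxIndepIn_iff_forall_exists_adj.mp hS
  obtain ⟨s, hsS, hsx⟩ := hdom x (Finset.mem_erase.mpr ⟨hxy.ne, hxA⟩) hxS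
  exact ⟨s, hsS, hx s y hsx.symm hxy (Finset.ne_of_mem_erase (hSindep.1 hsS))⟩

theorem WellCoveredOn.erase_of_isSimplicialVertex {G : SimpleGraph V} {A : Finset V} {x y : V}
    (hA : WellCoveredOn G A) (hx : IsSimplicialVertex G x) (hxA : x ∈ A) (hxy : G.Adj x y) :
    WellCoveredOn G (A.erase y) := fun S T hS hT =>
  hA S T (hS.of_erase (hx.exists_adj_of_isMaxIndepIn_erase hxA hxy hS))
    (hT.of_erase (hx.exists_adj_of_isMaxIndepIn_erase hxA hxy hT))

/-- If `G` is well-covered and `x` is a simplicial vertex, then for every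
neighbour `y` of `x`, the graph `G \ y` is also well-covered. -/
theorem statement1 {V : Type*} [Fintype V] (G : SimpleGraph V)
    (hwc : WellCovered G) (x : V) (hx : IsSimplicialVertex G x) :
    ∀ y, G.Adj x y → WellCoveredOn G (Finset.univ.erase y) :=
  fun _ hxy => hwc.erase_of_isSimplicialVertex hx (Finset.mem_univ x) hxy
end
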